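/- Let μ ∈ ℂ with μ ≠ 0 and let x be a Floquet solution of the transposed system with multiplier μ. Define v = (v_1, …, v_N) ∈ (ℂ^d)^N by v_n = x((N − n)Δ) for n = 1, …, N. Then v ≠ 0 and M(μ)v = 0; that is, every differentiable p : [0,1] → (ℂ^d)^N with p'(s) = −A(s, μ)ᵀ p(s) on [0,1] and p(1) = v satisfies p(0) = B(μ)ᵀ v. (Forward direction of Theorem 4.3: eigenfunctions of the monodromy operator of the transposed delay system yield eigenvectors of the transposed nonlinear eigenvalue problem.) -/

import Mathlib

/-!
Sample a Floquet solution on the grid: `q(s)_n = x((N - n - s)Δ)`. Because the `A_j` are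
`T`-periodic and `x(t + T) = μ x(t)`, the delayed values `x(t - τ_j)` met in the transposed
equation are, up to the factors `μ^{a_k}`, again components of `q(s)`, so `q` solves the linear
ODE `p' = -A(s, μ)ᵀ p` on `[0, 1]`, with `q(1) = v` and `q(0) = B(μ)ᵀ v`. Solutions of this
ODE are determined by their value at `s = 1`, which gives `M(μ) v = 0`. If `v` were zero,
uniqueness would force `q ≡ 0`, i.e. `x = 0` on `[0, T)`, hence everywhere by the Floquet
relation.
-/

open scoped BigOperators

noncomputable section

/-- `aExp N k = ⌊(k-1)/N⌋` (floor division). -/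
def aExp (N : ℕ) (k : ℤ) : ℤ := Int.fdiv (k - 1) (N : ℤ)

/-- `bIdx N hN k` is the `Fin N` index (zero-based) corresponding to the
paper index `b_k = ((k-1) mod N) + 1 ∈ {1,…,N}`. -/
def bIdx (N : ℕ) (hN : 0 < N) (k : ℤ) : Fin N :=
  ⟨((k - 1) % (N : ℤ)).toNat, by
    have hN' : (0:ℤ) < (N:ℤ) := by exact_mod_cast hN
    have h1 : 0 ≤ (k - 1) % (N : ℤ) := Int.emod_nonneg _ (ne_of_gt hN')
    have h2 : (k - 1) % (N : ℤ) < (N : ℤ) := Int.emod_lt_of_pos _ hN'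
    omega⟩

/-- The block linear map `A(s,μ)` acting on `(ℂ^d)^N`:
`(A(s,μ)q)_n = Δ Σ_j A_j((s+n-1)Δ) μ^{a_{n-n_j}} q_{b_{n-n_j}}` (paper indices `n = 1,…,N`). -/
def Aop (d h N : ℕ) (hN : 0 < N) (Δ : ℝ)
    (A : Fin (h+1) → ℝ → Matrix (Fin d) (Fin d) ℝ) (nn : Fin (h+1) → ℕ)
    (s : ℝ) (μ : ℂ) (q : Fin N → Fin d → ℂ) : Fin N → Fin d → ℂ :=
  fun n i => (Δ : ℂ) * ∑ j : Fin (h+1),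
    μ ^ aExp N (((n : ℕ) : ℤ) + 1 - (nn j : ℤ)) *
      ∑ i' : Fin d, ((A j ((s + ((n : ℕ) : ℝ)) * Δ)) i i' : ℂ) *
        q (bIdx N hN (((n : ℕ) : ℤ) + 1 - (nn j : ℤ))) i'

/-- The linear map `B(μ)` on `(ℂ^d)^N`:
`(B(μ)q)_n = q_{n+1}` for `n = 1,…,N-1` and `(B(μ)q)_N = μ q_1`. -/
def Bop (d N : ℕ) (hN : 0 < N) (μ : ℂ) (q : Fin N → Fin d → ℂ) : Fin N → Fin d → ℂ :=
  fun n i => if hn : (n : ℕ) + 1 < N then q ⟨(n : ℕ) + 1, hn⟩ i else μ * q ⟨0, hN⟩ i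

/-- The transpose (without conjugation) `A(s,μ)ᵀ` of the block map `A(s,μ)`,
acting on `p ∈ (ℂ^d)^N`. -/
def AopT (d h N : ℕ) (hN : 0 < N) (Δ : ℝ)
    (A : Fin (h+1) → ℝ → Matrix (Fin d) (Fin d) ℝ) (nn : Fin (h+1) → ℕ)
    (s : ℝ) (μ : ℂ) (p : Fin N → Fin d → ℂ) : Fin N → Fin d → ℂ :=
  fun n i => (Δ : ℂ) * ∑ m : Fin N, ∑ j : Fin (h+1),
    if n = bIdx N hN (((m : ℕ) : ℤ) + 1 - (nn j : ℤ)) then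
      μ ^ aExp N (((m : ℕ) : ℤ) + 1 - (nn j : ℤ)) *
        ∑ i' : Fin d, ((A j ((s + ((m : ℕ) : ℝ)) * Δ)) i' i : ℂ) * p m i'
    else 0

/-- The transpose `B(μ)ᵀ` of `B(μ)`:
`(B(μ)ᵀ v)_1 = μ v_N` and `(B(μ)ᵀ v)_n = v_{n-1}` for `n = 2,…,N`. -/
def BopT (d N : ℕ) (hN : 0 < N) (μ : ℂ) (v : Fin N → Fin d → ℂ) : Fin N → Fin d → ℂ :=
  fun n i => if hn : 0 < (n : ℕ) then
      v ⟨(n : ℕ) - 1, by have := n.isLt; omega⟩ i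
    else μ * v ⟨N - 1, by omega⟩ i

/-- A Floquet solution of the transposed periodic delay system
`x'(t) = Σ_j A_j(-t + τ_j)ᵀ x(t - τ_j)` (with `τ_j = n_j Δ`) with multiplier `μ`. -/
def IsFloquetSolutionT (d h : ℕ) (A : Fin (h+1) → ℝ → Matrix (Fin d) (Fin d) ℝ)
    (nn : Fin (h+1) → ℕ) (Δ T : ℝ) (μ : ℂ) (x : ℝ → Fin d → ℂ) : Prop :=
  (∃ t, x t ≠ 0) ∧
  (∀ t : ℝ, HasDerivAt x (fun i => ∑ j : Fin (h+1), ∑ i' : Fin d,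
      ((A j (-t + (nn j : ℝ) * Δ)) i' i : ℂ) * x (t - (nn j : ℝ) * Δ) i') t) ∧
  (∀ t : ℝ, x (t + T) = fun i => μ * x t i)

open Set

section Floquet

variable {𝕜 E : Type*} [DivisionRing 𝕜] [AddCommGroup E] [Module 𝕜 E]
  {f : ℝ → E} {T : ℝ} {μ : 𝕜}

theorem floquet_add_int_mul (hμ : μ ≠ 0) (hf : ∀ t, f (t + T) = μ • f t) (k : ℤ) (t : ℝ) :
    f (t + k * T) = μ ^ k • f t := by
  induction k using Int.induction_on with
  | zero => simp
  | succ k ih =>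
    rw [show t + ((k + 1 : ℤ) : ℝ) * T = t + (k : ℤ) * T + T by push_cast; ring, hf, ih,
      smul_smul, ← zpow_one_add₀ hμ, add_comm (1 : ℤ)]
  | pred k ih =>
    have hstep := hf (t + ((-k - 1 : ℤ) : ℝ) * T)
    rw [show t + ((-k - 1 : ℤ) : ℝ) * T + T = t + (-k : ℤ) * T by push_cast; ring, ih] at hstep
    have hpow : μ ^ (-(k : ℤ) - 1) = μ⁻¹ * μ ^ (-(k : ℤ)) := by
      rw [sub_eq_neg_add, zpow_add₀ hμ, zpow_neg_one]
    rw [hpow, ← smul_smul, hstep, smul_smul, inv_mul_cancel₀ hμ, one_smul]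

theorem floquet_eq_zero_of_eqOn_Ico (hμ : μ ≠ 0) (hT : 0 < T) (hf : ∀ t, f (t + T) = μ • f t)
    (h : EqOn f 0 (Ico 0 T)) : f = 0 := by
  funext t
  obtain ⟨k, hk, -⟩ := existsUnique_add_zsmul_mem_Ico hT t 0
  rw [zero_add, zsmul_eq_mul] at hk
  have := floquet_add_int_mul hμ hf k t
  rw [h hk, Pi.zero_apply, eq_comm, smul_eq_zero] at this
  exact this.resolve_left (zpow_ne_zero _ hμ)

end Floquet

section Indices

variable {N : ℕ} (hN : 0 < N)

theorem mul_aExp_add_bIdx (k : ℤ) : (N : ℤ) * aExp N k + (bIdx N hN k : ℕ) = k - 1 := by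
  have h0 : 0 ≤ (k - 1) % (N : ℤ) := Int.emod_nonneg _ (by omega)
  simp only [aExp, bIdx, Int.fdiv_eq_ediv, Int.natCast_nonneg, true_or, if_true, sub_zero,
    Int.toNat_of_nonneg h0, Int.mul_ediv_add_emod]

theorem bIdx_eq_iff (k : ℤ) (n : Fin N) : bIdx N hN k = n ↔ (k - 1) % N = (n : ℕ) := by
  have h0 : 0 ≤ (k - 1) % (N : ℤ) := Int.emod_nonneg _ (by omega)
  rw [Fin.ext_iff]
  change ((k - 1) % (N : ℤ)).toNat = (n : ℕ) ↔ _
  omega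

theorem eq_bIdx_sub_iff (b : ℕ) (m n : Fin N) :
    n = bIdx N hN ((m : ℕ) + 1 - b) ↔ m = ⟨((n : ℕ) + b) % N, Nat.mod_lt _ hN⟩ := by
  have hmod (r : Fin N) : ((r : ℕ) : ℤ) % N = r := Int.emod_eq_of_lt (by omega) (by omega)
  rw [eq_comm, bIdx_eq_iff, Fin.ext_iff, ← Int.natCast_inj, Int.natCast_mod]
  conv_lhs => rw [← hmod n]
  conv_rhs => rw [← hmod m]
  rw [Int.emod_eq_emod_iff_emod_sub_eq_zero, Int.emod_eq_emod_iff_emod_sub_eq_zero]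
  push_cast
  ring_nf

theorem sum_ite_eq_bIdx_sub {M : Type*} [AddCommMonoid M] (b : ℕ) (n : Fin N)
    (f : Fin N → ℤ → M) (c : M)
    (hf : ∀ (m : Fin N) (a : ℤ), ((m : ℕ) : ℤ) - b = N * a + (n : ℕ) → f m a = c) :
    ∑ m : Fin N, (if n = bIdx N hN ((m : ℕ) + 1 - b) then f m (aExp N ((m : ℕ) + 1 - b))
      else 0) = c := by
  set m₀ : Fin N := ⟨((n : ℕ) + b) % N, Nat.mod_lt _ hN⟩
  have hm₀ : n = bIdx N hN ((m₀ : ℕ) + 1 - b) := (eq_bIdx_sub_iff hN b m₀ n).2 rfl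
  simp_rw [eq_bIdx_sub_iff hN b _ n]
  rw [Finset.sum_ite_eq', if_pos (Finset.mem_univ _)]
  apply hf
  have := mul_aExp_add_bIdx hN ((m₀ : ℕ) + 1 - b)
  rw [← hm₀] at this
  linarith

end Indices

theorem ODE_solution_unique_of_continuousOn_clm_left {E : Type*} [NormedAddCommGroup E]
    [NormedSpace ℝ E] {L : ℝ → E →L[ℝ] E} {f g : ℝ → E} {a b : ℝ}
    (hL : ContinuousOn L (Icc a b))
    (hf : ∀ t ∈ Icc a b, HasDerivAt f (L t (f t)) t)
    (hg : ∀ t ∈ Icc a b, HasDerivAt g (L t (g t)) t) (hb : f b = g b) :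
    EqOn f g (Icc a b) := by
  obtain ⟨K, hK⟩ := isCompact_Icc.exists_bound_of_continuousOn hL
  have hlip : ∀ t ∈ Ioc a b, LipschitzOnWith K.toNNReal (L t) univ := fun t ht =>
    ((L t).lipschitz.weaken <| by
      rw [← norm_toNNReal]; exact Real.toNNReal_le_toNNReal (hK t (Ioc_subset_Icc_self ht))
      ).lipschitzOnWith
  exact ODE_solution_unique_of_mem_Icc_left hlip (HasDerivAt.continuousOn hf)
    (fun t ht => (hf t (Ioc_subset_Icc_self ht)).hasDerivWithinAt) (fun _ _ => trivial)
    (HasDerivAt.continuousOn hg)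
    (fun t ht => (hg t (Ioc_subset_Icc_self ht)).hasDerivWithinAt) (fun _ _ => trivial) hb

section TransposedBlockOperator

variable {d h N : ℕ} (hN : 0 < N) (Δ : ℝ) (A : Fin (h+1) → ℝ → Matrix (Fin d) (Fin d) ℝ)
  (nn : Fin (h+1) → ℕ)

-- In block row `n`, delay `j` only sees the block `m` with `m - n_j ≡ n (mod N)`, weighted by
-- `μ ^ a` where `m - n_j = N a + n`.
theorem AopT_apply_eq_of_shift (s : ℝ) (μ : ℂ) (p : Fin N → Fin d → ℂ) (n : Fin N) (i : Fin d)
    (c : Fin (h+1) → ℂ)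
    (hc : ∀ j (m : Fin N) (a : ℤ), ((m : ℕ) : ℤ) - nn j = N * a + (n : ℕ) →
      μ ^ a * ∑ i', (A j ((s + ((m : ℕ) : ℝ)) * Δ) i' i : ℂ) * p m i' = c j) :
    AopT d h N hN Δ A nn s μ p n i = Δ * ∑ j, c j := by
  rw [AopT, Finset.sum_comm]
  congr 1
  exact Finset.sum_congr rfl fun j _ => sum_ite_eq_bIdx_sub hN (nn j) n _ (c j) (hc j)

def AopTLinearMap (s : ℝ) (μ : ℂ) : (Fin N → Fin d → ℂ) →ₗ[ℂ] (Fin N → Fin d → ℂ) where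
  toFun := AopT d h N hN Δ A nn s μ
  map_add' p q := by
    funext n i
    simp only [AopT, Pi.add_apply, mul_add, Finset.sum_add_distrib, ite_add_zero]
  map_smul' c p := by
    funext n i
    simp only [AopT, Pi.smul_apply, smul_eq_mul, RingHom.id_apply, Finset.mul_sum, mul_ite,
      mul_zero, mul_left_comm]

theorem continuous_AopT (hA : ∀ j, Continuous (A j)) (μ : ℂ) (p : Fin N → Fin d → ℂ) :
    Continuous fun s => AopT d h N hN Δ A nn s μ p := by
  refine continuous_pi fun n => continuous_pi fun i => ?_
  refine continuous_const.mul <| continuous_finsetSum _ fun m _ =>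
    continuous_finsetSum _ fun j _ => ?_
  split_ifs <;> fun_prop

end TransposedBlockOperator

-- With zero-based `n`, `gridSamples N Δ x 1` is the vector `v` of the paper.
def gridSamples {d : ℕ} (N : ℕ) (Δ : ℝ) (x : ℝ → Fin d → ℂ) (s : ℝ) : Fin N → Fin d → ℂ :=
  fun n => x ((N - (n : ℕ) - s) * Δ)

section GridSamples

variable {d N : ℕ} {Δ : ℝ} {μ : ℂ} {x : ℝ → Fin d → ℂ}

theorem hasDerivAt_gridSamples {h : ℕ} (hN : 0 < N)
    (A : Fin (h+1) → ℝ → Matrix (Fin d) (Fin d) ℝ) (hper : ∀ j t, A j (t + N * Δ) = A j t)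
    (nn : Fin (h+1) → ℕ) (hμ : μ ≠ 0)
    (hdde : ∀ t : ℝ, HasDerivAt x (fun i => ∑ j : Fin (h+1), ∑ i' : Fin d,
      ((A j (-t + (nn j : ℝ) * Δ)) i' i : ℂ) * x (t - (nn j : ℝ) * Δ) i') t)
    (hfl : ∀ t, x (t + N * Δ) = fun i => μ * x t i) (s : ℝ) :
    HasDerivAt (gridSamples N Δ x)
      (fun n i => -AopT d h N hN Δ A nn s μ (gridSamples N Δ x s) n i) s := by
  rw [hasDerivAt_pi]
  intro n
  set t := ((N : ℝ) - (n : ℕ) - s) * Δ with ht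
  have hu : HasDerivAt (fun s => ((N : ℝ) - (n : ℕ) - s) * Δ) (-Δ) s := by
    simpa using ((hasDerivAt_id s).const_sub ((N : ℝ) - (n : ℕ))).mul_const Δ
  refine ((hdde t).scomp s hu).congr_deriv ?_
  funext i
  rw [AopT_apply_eq_of_shift hN Δ A nn s μ _ n i
    (fun j => ∑ i', (A j (-t + nn j * Δ) i' i : ℂ) * x (t - nn j * Δ) i')]
  · simp [Complex.real_smul]
  · intro j m a hm
    have hmR : ((m : ℕ) : ℝ) = nn j + N * a + (n : ℕ) := by
      exact_mod_cast (by linarith : ((m : ℕ) : ℤ) = nn j + N * a + (n : ℕ))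
    have hA : A j ((s + (m : ℕ)) * Δ) = A j (-t + nn j * Δ) := by
      rw [← Function.Periodic.int_mul (hper j) (a + 1) (-t + nn j * Δ)]
      congr 1
      rw [ht, hmR]
      push_cast
      ring
    have hx : x ((N - ((m : ℕ) : ℝ) - s) * Δ) = μ ^ (-a) • x (t - nn j * Δ) := by
      rw [← floquet_add_int_mul hμ hfl]
      congr 1
      rw [ht, hmR]
      push_cast
      ring
    simp only [gridSamples, hA, hx, Pi.smul_apply, smul_eq_mul, Finset.mul_sum]
    refine Finset.sum_congr rfl fun i' _ => ?_
    rw [zpow_neg]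
    field_simp

theorem gridSamples_zero (hN : 0 < N) (hfl : ∀ t, x (t + N * Δ) = fun i => μ * x t i) :
    gridSamples N Δ x 0 = BopT d N hN μ (gridSamples N Δ x 1) := by
  funext n i
  simp only [gridSamples, BopT]
  split_ifs with hn
  · rw [Nat.cast_pred hn]
    ring_nf
  · rw [show (n : ℕ) = 0 by omega, Nat.cast_pred hN]
    convert congrFun (hfl 0) i using 3 <;> ring

theorem eq_zero_of_gridSamples_eqOn_zero (hN : 0 < N)
    (hfl : ∀ t, x (t + N * Δ) = fun i => μ * x t i) (hΔ : 0 < Δ) (hμ : μ ≠ 0)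
    (h : EqOn (gridSamples N Δ x) 0 (Icc 0 1)) : x = 0 := by
  refine floquet_eq_zero_of_eqOn_Ico hμ (by positivity) hfl fun t ht => ?_
  have hu0 : 0 ≤ t / Δ := div_nonneg ht.1 hΔ.le
  have huN : t / Δ < N := (div_lt_iff₀ hΔ).2 ht.2
  set k := ⌊t / Δ⌋₊
  have hk : k < N := (Nat.floor_lt hu0).2 huN
  have hs : 1 - (t / Δ - k) ∈ Icc (0 : ℝ) 1 :=
    ⟨by linarith [Nat.lt_floor_add_one (t / Δ)], by linarith [Nat.floor_le hu0]⟩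
  have hcast : ((N - 1 - k : ℕ) : ℝ) = N - 1 - k := by
    rw [Nat.cast_sub (by omega), Nat.cast_sub (by omega), Nat.cast_one]
  have := congrFun (h hs) ⟨N - 1 - k, by omega⟩
  simp only [gridSamples, Pi.zero_apply, hcast] at this
  rw [Pi.zero_apply]
  convert this using 2
  field_simp
  ring

end GridSamples

theorem transposed_eigenfunction_to_nleig_general
    (d h N : ℕ) (hN : 0 < N) (Δ : ℝ) (hΔ : 0 < Δ)
    (A : Fin (h+1) → ℝ → Matrix (Fin d) (Fin d) ℝ)
    (hA : ∀ j, Continuous (A j))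
    (hper : ∀ j t, A j (t + (N : ℝ) * Δ) = A j t)
    (nn : Fin (h+1) → ℕ)
    (μ : ℂ) (hμ : μ ≠ 0)
    (x : ℝ → Fin d → ℂ)
    (hx : IsFloquetSolutionT d h A nn Δ ((N : ℝ) * Δ) μ x) :
    (fun (n : Fin N) (i : Fin d) => x (((N : ℝ) - (((n : ℕ) : ℝ) + 1)) * Δ) i) ≠ 0 ∧
    (∀ p : ℝ → Fin N → Fin d → ℂ,
      (∀ s ∈ Set.Icc (0:ℝ) 1,
        HasDerivAt p (fun n i => -(AopT d h N hN Δ A nn s μ (p s) n i)) s) →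
      p 1 = (fun (n : Fin N) (i : Fin d) => x (((N : ℝ) - (((n : ℕ) : ℝ) + 1)) * Δ) i) →
      p 0 = BopT d N hN μ
        (fun (n : Fin N) (i : Fin d) => x (((N : ℝ) - (((n : ℕ) : ℝ) + 1)) * Δ) i)) := by
  obtain ⟨⟨t₀, hxt₀⟩, hdde, hfl⟩ := hx
  let L : ℝ → (Fin N → Fin d → ℂ) →L[ℝ] (Fin N → Fin d → ℂ) := fun s =>
    -LinearMap.toContinuousLinearMap ((AopTLinearMap hN Δ A nn s μ).restrictScalars ℝ)
  have hL : Continuous L :=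
    continuous_clm_apply.2 fun p => (continuous_AopT hN Δ A nn hA μ p).neg
  have huniq {f g : ℝ → Fin N → Fin d → ℂ} := ODE_solution_unique_of_continuousOn_clm_left
    (f := f) (g := g) (a := 0) (b := 1) hL.continuousOn
  have hq : ∀ s ∈ Icc (0 : ℝ) 1, HasDerivAt (gridSamples N Δ x) (L s (gridSamples N Δ x s)) s :=
    fun s _ => hasDerivAt_gridSamples hN A hper nn hμ hdde hfl s
  have hq1 : gridSamples N Δ x 1 = fun (n : Fin N) i => x ((N - ((n : ℕ) + 1 : ℝ)) * Δ) i := by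
    funext n i
    simp only [gridSamples]
    ring_nf
  refine ⟨fun hv => hxt₀ ?_, fun p hp hp1 => ?_⟩
  · have hzero : EqOn (gridSamples N Δ x) 0 (Icc 0 1) :=
      huniq hq (fun s _ => (hasDerivAt_const s 0).congr_deriv (map_zero _).symm) (hq1.trans hv)
    rw [eq_zero_of_gridSamples_eqOn_zero hN hfl hΔ hμ hzero]
    rfl
  · rw [huniq hp hq (hp1.trans hq1.symm) ⟨le_rfl, zero_le_one⟩, gridSamples_zero hN hfl, hq1]

/-- **Theorem 4.3, forward direction.** If `x` is a Floquet solution of the transposed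
system with multiplier `μ ≠ 0`, then `v_n = x((N-n)Δ)` is nonzero and satisfies
`M(μ)v = 0`: every solution of `p' = -A(s,μ)ᵀ p` on `[0,1]` with `p(1) = v` satisfies
`p(0) = B(μ)ᵀ v`. -/
theorem transposed_eigenfunction_to_nleig
    (d h N : ℕ) (hd : 0 < d) (hN : 0 < N) (Δ : ℝ) (hΔ : 0 < Δ)
    (A : Fin (h+1) → ℝ → Matrix (Fin d) (Fin d) ℝ)
    (hA : ∀ j, Continuous (A j))
    (hper : ∀ j t, A j (t + (N : ℝ) * Δ) = A j t)
    (nn : Fin (h+1) → ℕ) (hn0 : nn 0 = 0)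
    (hmono : ∀ i j : Fin (h+1), 1 ≤ (i : ℕ) → i < j → nn i < nn j)
    (μ : ℂ) (hμ : μ ≠ 0)
    (x : ℝ → Fin d → ℂ)
    (hx : IsFloquetSolutionT d h A nn Δ ((N : ℝ) * Δ) μ x) :
    (fun (n : Fin N) (i : Fin d) => x (((N : ℝ) - (((n : ℕ) : ℝ) + 1)) * Δ) i) ≠ 0 ∧
    (∀ p : ℝ → Fin N → Fin d → ℂ,
      (∀ s ∈ Set.Icc (0:ℝ) 1,
        HasDerivAt p (fun n i => -(AopT d h N hN Δ A nn s μ (p s) n i)) s) →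
      p 1 = (fun (n : Fin N) (i : Fin d) => x (((N : ℝ) - (((n : ℕ) : ℝ) + 1)) * Δ) i) →
      p 0 = BopT d N hN μ
        (fun (n : Fin N) (i : Fin d) => x (((N : ℝ) - (((n : ℕ) : ℝ) + 1)) * Δ) i)) :=
  transposed_eigenfunction_to_nleig_general d h N hN Δ hΔ A hA hper nn μ hμ x hx
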